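/- arXiv:1809.02957 — 2 statements merged into one kernel-verified Lean document; each statement's English description precedes it below -/
import Mathlib

section
/- For any real numbers u_1, u_2, u_3, u_4, define the positive and negative parts u_i^+ = max(u_i, 0), u_i^- = min(u_i, 0). On a rectangle with h_x, h_y > 0, α > 0, stabilization parameter κ ≥ 0, and η = κ h_x h_y / (2h(h_x + h_y)) for a parameter h > 0, the pure diffusion SWG element bilinear form satisfies: κ S_T(u^-, u^+) + α(∇_w u^-, ∇_w u^+)_T = -η ∑_{i∈{1,2}, j∈{3,4}} (u_i^- u_j^+ + u_j^- u_i^+) - (α h_y²/(h_x h_y) - η)(u_1^- u_2^+ + u_2^- u_1^+) - (α h_x²/(h_x h_y) - η)(u_3^- u_4^+ + u_4^- u_3^+). In particular, if 0 ≤ η ≤ min(α h_y/h_x, α h_x/h_y), then κ S_T(u^-, u^+) + α(∇_w u^-, ∇_w u^+)_T ≥ 0. -/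
/-!
Both the stabilizer and the weak-gradient term are sums of products
`(linear form in u⁻) * (same form in u⁺)`. Expanding them, every diagonal product `uᵢ⁻ uᵢ⁺`
vanishes, and what remains are cross products `uᵢ⁻ uⱼ⁺ ≤ 0` with coefficients `-η` (edges of
different direction) or `η - α h_y/h_x`, `η - α h_x/h_y` (opposite parallel edges). These are all
nonpositive once `0 ≤ η ≤ min (α h_y/h_x) (α h_x/h_y)`, which gives the nonnegativity.
-/

lemma min_zero_mul_max_zero (a : ℝ) : min a 0 * max a 0 = 0 := by
  rcases le_total a 0 with h | h
  · rw [max_eq_right h, mul_zero]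
  · rw [min_eq_right h, zero_mul]

/-- The element form `κ S_T + α (∇_w ·, ∇_w ·)_T` with `η` the stabilizer weight and
`a = α h_y/h_x`, `b = α h_x/h_y` the weights of the two weak-gradient components;
edges are indexed left, right, bottom, top. -/
def swgForm (η a b : ℝ) (v w : Fin 4 → ℝ) : ℝ :=
  η * ((v 0 + v 1 - v 2 - v 3) * (w 0 + w 1 - w 2 - w 3))
    + a * ((v 1 - v 0) * (w 1 - w 0)) + b * ((v 3 - v 2) * (w 3 - w 2))

theorem swgForm_eq_of_mul_eq_zero (η a b : ℝ) {v w : Fin 4 → ℝ} (hvw : ∀ i, v i * w i = 0) :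
    swgForm η a b v w =
      -η * ((v 0 * w 2 + v 0 * w 3 + v 1 * w 2 + v 1 * w 3)
            + (v 2 * w 0 + v 2 * w 1 + v 3 * w 0 + v 3 * w 1))
      - (a - η) * (v 0 * w 1 + v 1 * w 0)
      - (b - η) * (v 2 * w 3 + v 3 * w 2) := by
  unfold swgForm
  linear_combination (η + a) * hvw 0 + (η + a) * hvw 1 + (η + b) * hvw 2 + (η + b) * hvw 3

theorem swgForm_nonneg {η a b : ℝ} {v w : Fin 4 → ℝ} (hvw : ∀ i, v i * w i = 0)
    (hv : ∀ i, v i ≤ 0) (hw : ∀ i, 0 ≤ w i) (hη : 0 ≤ η) (ha : η ≤ a) (hb : η ≤ b) :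
    0 ≤ swgForm η a b v w := by
  have cross : ∀ i j, v i * w j ≤ 0 := fun i j => mul_nonpos_of_nonpos_of_nonneg (hv i) (hw j)
  rw [swgForm_eq_of_mul_eq_zero η a b hvw]
  nlinarith [cross 0 2, cross 0 3, cross 1 2, cross 1 3, cross 2 0, cross 2 1, cross 3 0,
    cross 3 1, cross 0 1, cross 1 0, cross 2 3, cross 3 2]

theorem swg_diffusion_neg_pos_parts_general
    (hx hy h α κ u1 u2 u3 u4 : ℝ)
    (hhx : 0 < hx) (hhy : 0 < hy) (hh : 0 < h) (hκ : 0 ≤ κ)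
    (η : ℝ) (hη : η = κ * hx * hy / (2 * h * (hx + hy)))
    (up un : Fin 4 → ℝ)
    (hup : up = fun i => max (![u1, u2, u3, u4] i) 0)
    (hun : un = fun i => min (![u1, u2, u3, u4] i) 0)
    (ST : (Fin 4 → ℝ) → (Fin 4 → ℝ) → ℝ)
    (hST : ∀ v w : Fin 4 → ℝ, ST v w =
      (hx * hy) / (2 * h * (hx + hy)) * (v 0 + v 1 - v 2 - v 3) * (w 0 + w 1 - w 2 - w 3))
    (aT : (Fin 4 → ℝ) → (Fin 4 → ℝ) → ℝ)
    (haT : ∀ v w : Fin 4 → ℝ, aT v w =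
      α * (hx * hy) * (((v 1 - v 0) / hx) * ((w 1 - w 0) / hx)
        + ((v 3 - v 2) / hy) * ((w 3 - w 2) / hy))) :
    (κ * ST un up + aT un up =
      -η * ((un 0 * up 2 + un 0 * up 3 + un 1 * up 2 + un 1 * up 3)
            + (un 2 * up 0 + un 2 * up 1 + un 3 * up 0 + un 3 * up 1))
      - (α * hy ^ 2 / (hx * hy) - η) * (un 0 * up 1 + un 1 * up 0)
      - (α * hx ^ 2 / (hx * hy) - η) * (un 2 * up 3 + un 3 * up 2))
    ∧ (η ≤ min (α * hy / hx) (α * hx / hy) →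
        0 ≤ κ * ST un up + aT un up) := by
  have hform : κ * ST un up + aT un up = swgForm η (α * hy / hx) (α * hx / hy) un up := by
    rw [hST, haT, hη, swgForm]
    field_simp
    ring
  have hyy : α * hy ^ 2 / (hx * hy) = α * hy / hx := by field_simp
  have hxx : α * hx ^ 2 / (hx * hy) = α * hx / hy := by field_simp
  have hdisj : ∀ i, un i * up i = 0 := fun i => by
    rw [hun, hup]; exact min_zero_mul_max_zero _
  rw [hform, hyy, hxx]
  refine ⟨swgForm_eq_of_mul_eq_zero _ _ _ hdisj, fun hcond => ?_⟩
  refine swgForm_nonneg hdisj (fun i => ?_) (fun i => ?_) (by rw [hη]; positivity)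
    (hcond.trans (min_le_left _ _)) (hcond.trans (min_le_right _ _))
  · rw [hun]; exact min_le_right _ _
  · rw [hup]; exact le_max_right _ _

/-- Decomposition of the pure-diffusion SWG element bilinear form applied to the
negative and positive parts, and its nonnegativity under the parameter
condition. -/
theorem swg_diffusion_neg_pos_parts
    (hx hy h α κ u1 u2 u3 u4 : ℝ)
    (hhx : 0 < hx) (hhy : 0 < hy) (hh : 0 < h) (hα : 0 < α) (hκ : 0 ≤ κ)
    (η : ℝ) (hη : η = κ * hx * hy / (2 * h * (hx + hy)))
    (up un : Fin 4 → ℝ)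
    (hup : up = fun i => max (![u1, u2, u3, u4] i) 0)
    (hun : un = fun i => min (![u1, u2, u3, u4] i) 0)
    (ST : (Fin 4 → ℝ) → (Fin 4 → ℝ) → ℝ)
    (hST : ∀ v w : Fin 4 → ℝ, ST v w =
      (hx * hy) / (2 * h * (hx + hy)) * (v 0 + v 1 - v 2 - v 3) * (w 0 + w 1 - w 2 - w 3))
    (aT : (Fin 4 → ℝ) → (Fin 4 → ℝ) → ℝ)
    (haT : ∀ v w : Fin 4 → ℝ, aT v w =
      α * (hx * hy) * (((v 1 - v 0) / hx) * ((w 1 - w 0) / hx)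
        + ((v 3 - v 2) / hy) * ((w 3 - w 2) / hy))) :
    (κ * ST un up + aT un up =
      -η * ((un 0 * up 2 + un 0 * up 3 + un 1 * up 2 + un 1 * up 3)
            + (un 2 * up 0 + un 2 * up 1 + un 3 * up 0 + un 3 * up 1))
      - (α * hy ^ 2 / (hx * hy) - η) * (un 0 * up 1 + un 1 * up 0)
      - (α * hx ^ 2 / (hx * hy) - η) * (un 2 * up 3 + un 3 * up 2))
    ∧ (η ≤ min (α * hy / hx) (α * hx / hy) →
        0 ≤ κ * ST un up + aT un up) :=
  swg_diffusion_neg_pos_parts_general hx hy h α κ u1 u2 u3 u4 hhx hhy hh hκ η hη up un hup hun ST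
    hST aT haT
end

section
/- (Discrete maximum principle, abstract algebraic form.) Let V = ℝ^M be the space of values of u_b at interior midpoints together with boundary midpoints, and let A be a bilinear form on boundary functions satisfying: (i) coercivity A(v,v) ≥ Λ‖v‖² > 0 for nonzero v vanishing on boundary nodes; (ii) the sign property A(u⁻, u⁺) ≥ 0, where for k ∈ ℝ, u⁺ = max(u - k, 0) and u⁻ = min(u - k, 0) componentwise; and (iii) A(c,·) = 0 for constant vectors c on the homogeneous subspace. If u ∈ ℝ^M satisfies A(u, v) ≤ 0 for every componentwise-nonnegative v vanishing at boundary nodes, then max over all nodes of u equals max over boundary nodes of u. -/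
open Finset

/-- Abstract algebraic form of the discrete maximum principle. -/
theorem discrete_maximum_principle_abstract
    (M : ℕ) (B : Finset (Fin M)) (hB : B.Nonempty)
    (A : (Fin M → ℝ) →ₗ[ℝ] (Fin M → ℝ) →ₗ[ℝ] ℝ)
    (N : (Fin M → ℝ) → ℝ) (Λ : ℝ) (hΛ : 0 < Λ)
    -- (i) coercivity on the homogeneous subspace
    (hnorm : ∀ v : Fin M → ℝ, (∀ i ∈ B, v i = 0) → v ≠ 0 → 0 < N v)
    (hcoer : ∀ v : Fin M → ℝ, (∀ i ∈ B, v i = 0) → A v v ≥ Λ * (N v) ^ 2)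
    -- (ii) sign property for the positive/negative part splitting
    (hsign : ∀ (u : Fin M → ℝ) (k : ℝ),
      A (fun i => min (u i - k) 0) (fun i => max (u i - k) 0) ≥ 0)
    -- (iii) constants are annihilated on the homogeneous subspace
    (hconst : ∀ (c : ℝ) (v : Fin M → ℝ), (∀ i ∈ B, v i = 0) → A (fun _ => c) v = 0)
    (u : Fin M → ℝ)
    (hu : ∀ v : Fin M → ℝ, (∀ i, 0 ≤ v i) → (∀ i ∈ B, v i = 0) → A u v ≤ 0) :
    univ.sup' (univ_nonempty_iff.mpr ⟨hB.choose⟩) u = B.sup' hB u := by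
  set k : ℝ := B.sup' hB u with hk
  set θm : Fin M → ℝ := fun i => min (u i - k) 0 with hθm
  set θ : Fin M → ℝ := fun i => max (u i - k) 0 with hθ
  have hθ0 : ∀ i ∈ B, θ i = 0 := by
    intro i hi
    have : u i ≤ k := le_sup' u hi
    simp [hθ, max_eq_right, sub_nonpos.mpr this]
  have hθnn : ∀ i, 0 ≤ θ i := fun i => le_max_right _ _
  have huθ : A u θ ≤ 0 := hu θ hθnn hθ0
  have hsplit : u = θm + θ + (fun _ => k) := by
    funext i
    simp [hθ, hθm, min_add_max]
  have hA : A u θ = A θm θ + A θ θ := by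
    conv_lhs => rw [hsplit]
    rw [map_add, map_add, LinearMap.add_apply, LinearMap.add_apply,
      hconst k θ hθ0, add_zero]
  have hs : A θm θ ≥ 0 := hsign u k
  have hAθθ : A θ θ ≤ 0 := by linarith
  have hθeq : θ = 0 := by
    by_contra hne
    have h1 := hnorm θ hθ0 hne
    have h2 := hcoer θ hθ0
    nlinarith [mul_pos hΛ (pow_pos h1 2)]
  have hub : ∀ i, u i ≤ k := by
    intro i
    have h3 : u i - k ≤ θ i := le_max_left _ _
    rw [hθeq] at h3
    simpa using sub_nonpos.mp h3
  refine le_antisymm (Finset.sup'_le _ u fun i _ => hub i) ?_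
  exact Finset.sup'_le _ u fun i hi => le_sup' u (mem_univ i)
end
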